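/- arXiv:1708.06883 — 8 statements merged into one kernel-verified Lean document; each statement's English description precedes it below -/
import Mathlib

section
/- Let G be a finite simple graph on vertex set {x_1,...,x_h, y_1,...,y_h} such that X = {x_1,...,x_h} is a minimal vertex cover of G, Y = {y_1,...,y_h} is a maximal independent set of G, {x_i,y_i} ∈ E(G) for all i, and G satisfies: (1) for distinct i,j,k and z_i ∈ {x_i,y_i}, if {z_i,x_j} ∈ E(G) and {y_j,x_k} ∈ E(G) then {z_i,x_k} ∈ E(G); (2) if {x_i,y_j} ∈ E(G) then {x_i,x_j} ∉ E(G). Fix i and let N_G(x_i) \ X = {y_{i_1},...,y_{i_t}}. Define X' by replacing, for each j ∈ {i_1,...,i_t}, the vertex x_j by y_j (leaving the other x_j's unchanged), and let Y' = V(G) \ X'. Then Y' is a maximal independent set of G (and hence X' is a minimal vertex cover of G). -/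
open SimpleGraph

/-- Vertex type for a labeled very well-covered graph on 2h vertices:
`Sum.inl i` is xᵢ and `Sum.inr i` is yᵢ. -/
abbrev Vtx (h : ℕ) := Fin h ⊕ Fin h

variable {h : ℕ}

def xv (i : Fin h) : Vtx h := Sum.inl i
def yv (i : Fin h) : Vtx h := Sum.inr i

def IndepSet {W : Type*} (G : SimpleGraph W) (S : Set W) : Prop :=
  ∀ u ∈ S, ∀ v ∈ S, ¬ G.Adj u v

def MaxIndepSet {W : Type*} (G : SimpleGraph W) (S : Set W) : Prop :=
  IndepSet G S ∧ ∀ T : Set W, IndepSet G T → S ⊆ T → S = T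

def VertexCover {W : Type*} (G : SimpleGraph W) (C : Set W) : Prop :=
  ∀ u v : W, G.Adj u v → u ∈ C ∨ v ∈ C

def MinVertexCover {W : Type*} (G : SimpleGraph W) (C : Set W) : Prop :=
  VertexCover G C ∧ ∀ D : Set W, VertexCover G D → D ⊆ C → D = C

/-- Condition (1) of the Crupi–Rinaldo–Terai characterization. -/
def Cond1 (G : SimpleGraph (Vtx h)) : Prop :=
  ∀ i j k : Fin h, i ≠ j → j ≠ k → i ≠ k →
    ∀ z ∈ ({xv i, yv i} : Set (Vtx h)),
      G.Adj z (xv j) → G.Adj (yv j) (xv k) → G.Adj z (xv k)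

/-- Condition (2) of the Crupi–Rinaldo–Terai characterization. -/
def Cond2 (G : SimpleGraph (Vtx h)) : Prop :=
  ∀ i j : Fin h, G.Adj (xv i) (yv j) → ¬ G.Adj (xv i) (xv j)

def Xset (h : ℕ) : Set (Vtx h) := Set.range (xv (h := h))
def Yset (h : ℕ) : Set (Vtx h) := Set.range (yv (h := h))

/-!
`Y' = X'ᶜ` consists of the `xⱼ` with `yⱼ ∈ N(xᵢ)` and the `yⱼ` with `yⱼ ∉ N(xᵢ)`. It is
independent: two `y`'s are never adjacent because `X` is a cover; an edge `xⱼ yₖ` would give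
`yₖ ∈ N(xᵢ)` by condition (1) applied to `z = yₖ`; and an edge `xⱼ xₖ` would, by (1), give the
edge `xⱼ xᵢ` (or be one directly), which (2) forbids since `yⱼ ∈ N(xᵢ)`. It is maximal because every
vertex of `X'` has a neighbour in `Y'`: `xⱼ` has `yⱼ`, and `yⱼ ∈ N(xᵢ)` has `xᵢ`. A set whose
complement is a maximal independent set is a minimal vertex cover.
-/

section Generic

variable {W : Type*} {G : SimpleGraph W}

theorem vertexCover_iff_indepSet_compl {C : Set W} : VertexCover G C ↔ IndepSet G Cᶜ := by
  simp only [VertexCover, IndepSet, Set.mem_compl_iff]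
  grind

theorem maxIndepSet_of_forall_notMem_exists_adj {S : Set W} (hS : IndepSet G S)
    (hadj : ∀ v ∉ S, ∃ w ∈ S, G.Adj v w) : MaxIndepSet G S := by
  refine ⟨hS, fun T hT hST => hST.antisymm fun v hvT => ?_⟩
  by_contra hvS
  obtain ⟨w, hwS, hvw⟩ := hadj v hvS
  exact hT v hvT w (hST hwS) hvw

theorem minVertexCover_of_maxIndepSet_compl {C : Set W} (hC : MaxIndepSet G Cᶜ) :
    MinVertexCover G C := by
  refine ⟨vertexCover_iff_indepSet_compl.2 hC.1, fun D hD hDC => ?_⟩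
  have := hC.2 Dᶜ (vertexCover_iff_indepSet_compl.1 hD) (Set.compl_subset_compl.2 hDC)
  exact (compl_injective this).symm

end Generic

section Relabel

variable {G : SimpleGraph (Vtx h)}

/-- The set `X'` of the statement, for `i = i₀`. -/
def relabelCover (G : SimpleGraph (Vtx h)) (i : Fin h) : Set (Vtx h) :=
  {v | ∃ j : Fin h, (G.Adj (xv i) (yv j) ∧ v = yv j) ∨ (¬ G.Adj (xv i) (yv j) ∧ v = xv j)}

theorem xv_mem_relabelCover_iff {i j : Fin h} :
    xv j ∈ relabelCover G i ↔ ¬ G.Adj (xv i) (yv j) := by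
  simp [relabelCover, xv, yv]

theorem yv_mem_relabelCover_iff {i j : Fin h} :
    yv j ∈ relabelCover G i ↔ G.Adj (xv i) (yv j) := by
  simp [relabelCover, xv, yv]

theorem not_adj_yv_yv (hX : VertexCover G (Xset h)) (j k : Fin h) : ¬ G.Adj (yv j) (yv k) := by
  intro hjk
  rcases hX _ _ hjk with ⟨m, hm⟩ | ⟨m, hm⟩ <;> exact Sum.inl_ne_inr hm

theorem adj_xv_yv_trans (hpair : ∀ i : Fin h, G.Adj (xv i) (yv i)) (h1 : Cond1 G) {i j k : Fin h}
    (hij : G.Adj (xv i) (yv j)) (hjk : G.Adj (xv j) (yv k)) : G.Adj (xv i) (yv k) := by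
  by_contra hik
  have hkj : k ≠ j := by rintro rfl; exact hik hij
  have hji : j ≠ i := by rintro rfl; exact hik hjk
  have hki : k ≠ i := by rintro rfl; exact hik (hpair k)
  exact hik (h1 k j i hkj hji hki (yv k) (by simp) hjk.symm hij.symm).symm

theorem not_adj_xv_xv_of_adj_yv (h1 : Cond1 G) (h2 : Cond2 G) {i j k : Fin h}
    (hij : G.Adj (xv i) (yv j)) (hik : G.Adj (xv i) (yv k)) : ¬ G.Adj (xv j) (xv k) := by
  intro hjk
  have hjk' : j ≠ k := by rintro rfl; exact G.irrefl hjk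
  by_cases hji : j = i
  · subst hji; exact h2 j k hik hjk
  by_cases hki : k = i
  · subst hki; exact h2 k j hij hjk.symm
  exact h2 i j hij (h1 j k i hjk' hki hji (xv j) (by simp) hjk hik.symm).symm

theorem indepSet_compl_relabelCover (hX : VertexCover G (Xset h))
    (hpair : ∀ i : Fin h, G.Adj (xv i) (yv i)) (h1 : Cond1 G) (h2 : Cond2 G) (i : Fin h) :
    IndepSet G (relabelCover G i)ᶜ := by
  rintro (j | j) hj (k | k) hk hadj <;>
    simp only [Set.mem_compl_iff, ← xv.eq_def, ← yv.eq_def, xv_mem_relabelCover_iff,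
      yv_mem_relabelCover_iff, not_not] at hj hk hadj
  · exact not_adj_xv_xv_of_adj_yv h1 h2 hj hk hadj
  · exact hk (adj_xv_yv_trans hpair h1 hj hadj)
  · exact hj (adj_xv_yv_trans hpair h1 hk hadj.symm)
  · exact not_adj_yv_yv hX j k hadj

theorem exists_adj_compl_relabelCover (hpair : ∀ i : Fin h, G.Adj (xv i) (yv i)) (i : Fin h) :
    ∀ v ∈ relabelCover G i, ∃ w ∈ (relabelCover G i)ᶜ, G.Adj v w := by
  rintro (j | j) hj
  · exact ⟨yv j, yv_mem_relabelCover_iff.not.2 (xv_mem_relabelCover_iff.1 hj), hpair j⟩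
  · exact ⟨xv i, xv_mem_relabelCover_iff.not.2 (not_not.2 (hpair i)),
      (yv_mem_relabelCover_iff.1 hj).symm⟩

end Relabel

theorem stmt0_general (h : ℕ) (G : SimpleGraph (Vtx h))
    (hX : MinVertexCover G (Xset h))
    (hpair : ∀ i : Fin h, G.Adj (xv i) (yv i))
    (h1 : Cond1 G) (h2 : Cond2 G) (i₀ : Fin h)
    (X' Y' : Set (Vtx h))
    (hX' : X' = {v | ∃ j : Fin h,
      (G.Adj (xv i₀) (yv j) ∧ v = yv j) ∨ (¬ G.Adj (xv i₀) (yv j) ∧ v = xv j)})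
    (hY' : Y' = X'ᶜ) :
    MaxIndepSet G Y' ∧ MinVertexCover G X' := by
  change X' = relabelCover G i₀ at hX'
  subst hX' hY'
  have hmax : MaxIndepSet G (relabelCover G i₀)ᶜ :=
    maxIndepSet_of_forall_notMem_exists_adj (indepSet_compl_relabelCover hX.1 hpair h1 h2 i₀)
      fun v hv => exists_adj_compl_relabelCover hpair i₀ v (not_not.1 hv)
  exact ⟨hmax, minVertexCover_of_maxIndepSet_compl hmax⟩

/-- relabeling certain xⱼ/yⱼ pairs along the neighborhood of xᵢ₀
again yields a maximal independent set / minimal vertex cover. -/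
theorem stmt0 (h : ℕ) (G : SimpleGraph (Vtx h))
    (hX : MinVertexCover G (Xset h)) (hY : MaxIndepSet G (Yset h))
    (hpair : ∀ i : Fin h, G.Adj (xv i) (yv i))
    (h1 : Cond1 G) (h2 : Cond2 G) (i₀ : Fin h)
    (X' Y' : Set (Vtx h))
    (hX' : X' = {v | ∃ j : Fin h,
      (G.Adj (xv i₀) (yv j) ∧ v = yv j) ∨ (¬ G.Adj (xv i₀) (yv j) ∧ v = xv j)})
    (hY' : Y' = X'ᶜ) :
    MaxIndepSet G Y' ∧ MinVertexCover G X' :=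
  stmt0_general h G hX hpair h1 h2 i₀ X' Y' hX' hY'
end

section
/- Let G be a finite simple graph on vertex set {x_1,...,x_h, y_1,...,y_h} with Y = {y_1,...,y_h} a maximal independent set, X = {x_1,...,x_h} a vertex cover, {x_i,y_i} ∈ E(G) for all i, and satisfying: (1) for distinct i,j,k and z_i ∈ {x_i,y_i}, if {z_i,x_j} ∈ E(G) and {y_j,x_k} ∈ E(G) then {z_i,x_k} ∈ E(G); (2) if {x_i,y_j} ∈ E(G) then {x_i,x_j} ∉ E(G). Let e = {x_n, y_m} ∈ E(G) with n ≠ m, and let G' be the graph on V(G) whose edges are E(G) together with all pairs {u,v} of distinct vertices such that {u,x_n}, {y_m,v} ∈ E(G) or {u,y_m}, {x_n,v} ∈ E(G). Then Y is still an independent set of G'. -/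
/-! Every pair added to form `G'` contains a vertex adjacent in `G` to `yₘ ∈ Y`, so no added
pair lies inside the `G`-independent set `Y`. -/

open SimpleGraph

variable {h : ℕ}

/-- The graph obtained from `G` by adding all pairs of distinct vertices
even-connected with respect to the single edge `{a, b}`. -/
def ecGraph {W : Type*} (G : SimpleGraph W) (a b : W) : SimpleGraph W where
  Adj u v := u ≠ v ∧ (G.Adj u v ∨ (G.Adj u a ∧ G.Adj b v) ∨ (G.Adj u b ∧ G.Adj a v))
  symm := by
    constructor
    intro u v hv
    obtain ⟨hne, hor⟩ := hv
    refine ⟨hne.symm, ?_⟩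
    rcases hor with h' | ⟨h1, h2⟩ | ⟨h1, h2⟩
    · exact Or.inl h'.symm
    · exact Or.inr (Or.inr ⟨h2.symm, h1.symm⟩)
    · exact Or.inr (Or.inl ⟨h2.symm, h1.symm⟩)
  loopless := by constructor; intro u hu; exact hu.1 rfl

theorem IndepSet.ecGraph {W : Type*} {G : SimpleGraph W} {S : Set W} {b : W}
    (hS : IndepSet G S) (hb : b ∈ S) (a : W) : IndepSet (ecGraph G a b) S := by
  rintro u hu v hv ⟨-, huv | ⟨-, hbv⟩ | ⟨hub, -⟩⟩
  · exact hS u hu v hv huv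
  · exact hS b hb v hv hbv
  · exact hS u hu b hb hub

theorem stmt3_general (h : ℕ) (G : SimpleGraph (Vtx h))
    (hY : MaxIndepSet G (Yset h))
    (n m : Fin h)
    (G' : SimpleGraph (Vtx h)) (hG' : G' = ecGraph G (xv n) (yv m)) :
    IndepSet G' (Yset h) :=
  hG' ▸ hY.1.ecGraph ⟨m, rfl⟩ (xv n)

/-- adding the pairs even-connected with respect to an edge
{xₙ, yₘ} keeps Y an independent set. -/
theorem stmt3 (h : ℕ) (G : SimpleGraph (Vtx h))
    (hY : MaxIndepSet G (Yset h)) (hX : VertexCover G (Xset h))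
    (hpair : ∀ i : Fin h, G.Adj (xv i) (yv i))
    (h1 : Cond1 G) (h2 : Cond2 G)
    (n m : Fin h) (hnm : n ≠ m) (he : G.Adj (xv n) (yv m))
    (G' : SimpleGraph (Vtx h)) (hG' : G' = ecGraph G (xv n) (yv m)) :
    IndepSet G' (Yset h) :=
  stmt3_general h G hY n m G' hG'
end

section
/- Let G be a finite simple graph on vertex set {x_1,...,x_h, y_1,...,y_h} with Y = {y_1,...,y_h} a maximal independent set, X = {x_1,...,x_h} a minimal vertex cover, {x_i,y_i} ∈ E(G) for all i, and satisfying: (1) for distinct i,j,k and z_i ∈ {x_i,y_i}, if {z_i,x_j} ∈ E(G) and {y_j,x_k} ∈ E(G) then {z_i,x_k} ∈ E(G); (2) if {x_i,y_j} ∈ E(G) then {x_i,x_j} ∉ E(G). Let e = {x_n, y_m} ∈ E(G) and assume no vertex u of G is adjacent to both x_n and y_m. Let G' be the graph on V(G) whose edges are E(G) together with all pairs {u,v} of distinct vertices with ({u,x_n}, {y_m,v} ∈ E(G)) or ({u,y_m}, {x_n,v} ∈ E(G)). Then G' also satisfies condition (2): if {x_i, y_j} ∈ E(G') then {x_i, x_j}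 ∉ E(G'). -/
/-!
Each way of making `xᵢ` adjacent to `yⱼ` in `G'` is combined with each way of making it adjacent
to `xⱼ`. Adding the pair `{xᵢ, yⱼ}` through `xₙ ∼ xᵢ`, `yₘ ∼ yⱼ` is impossible since `Y` is
independent. In every other combination, condition (1) transports an edge into `xⱼ` along the
edge `yⱼ ∼ xᵢ` or `yⱼ ∼ xₙ`, producing either a vertex adjacent to both `xₙ` and `yₘ` or a
violation of condition (2) in `G`.
-/

open SimpleGraph

variable {h : ℕ}

variable {G : SimpleGraph (Vtx h)}

theorem Cond1.adj_yv_trans (h1 : Cond1 G) (hpair : ∀ i : Fin h, G.Adj (xv i) (yv i))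
    {a b c : Fin h} (hab : G.Adj (yv a) (xv b)) (hbc : G.Adj (yv b) (xv c)) :
    G.Adj (yv a) (xv c) := by
  by_cases hab' : a = b
  · subst hab'; exact hbc
  by_cases hbc' : b = c
  · subst hbc'; exact hab
  by_cases hac : a = c
  · subst hac; exact (hpair a).symm
  exact h1 a b c hab' hbc' hac (yv a) (Or.inr rfl) hab hbc

theorem Cond1.adj_xv_trans (h1 : Cond1 G) {a b c : Fin h} (hac : a ≠ c)
    (hab : G.Adj (xv a) (xv b)) (hbc : G.Adj (yv b) (xv c)) :
    G.Adj (xv a) (xv c) := by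
  by_cases hbc' : b = c
  · subst hbc'; exact hab
  exact h1 a b c (fun hab' => hab.ne (congrArg xv hab')) hbc' hac (xv a) (Or.inl rfl) hab hbc

theorem stmt4_general (h : ℕ) (G : SimpleGraph (Vtx h))
    (hY : MaxIndepSet G (Yset h))
    (hpair : ∀ i : Fin h, G.Adj (xv i) (yv i))
    (h1 : Cond1 G) (h2 : Cond2 G)
    (n m : Fin h)
    (hsq : ∀ u : Vtx h, ¬ (G.Adj u (xv n) ∧ G.Adj u (yv m)))
    (G' : SimpleGraph (Vtx h)) (hG' : G' = ecGraph G (xv n) (yv m)) :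
    Cond2 G' := by
  subst hG'
  rintro i j ⟨-, hxy⟩ ⟨-, hxx⟩
  rcases hxy with hxy | ⟨-, hmj⟩ | ⟨him, hnj⟩
  · rcases hxx with hxx | ⟨hin, hmj⟩ | ⟨him, hnj⟩
    · exact h2 i j hxy hxx
    · exact hsq (xv i) ⟨hin, (h1.adj_yv_trans hpair hmj hxy.symm).symm⟩
    · by_cases hni : n = i
      · subst hni; exact h2 n j hxy hnj
      · exact hsq (xv i) ⟨(h1.adj_xv_trans hni hnj hxy.symm).symm, him⟩
  · exact hY.1 _ ⟨m, rfl⟩ _ ⟨j, rfl⟩ hmj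
  · rcases hxx with hxx | ⟨hin, -⟩ | ⟨-, hnj'⟩
    · by_cases hin : i = n
      · subst hin; exact h2 i j hnj hxx
      · exact hsq (xv i) ⟨h1.adj_xv_trans hin hxx hnj.symm, him⟩
    · exact hsq (xv i) ⟨hin, him⟩
    · exact h2 n j hnj hnj'

/-- if no vertex is adjacent to both xₙ and yₘ (squarefree case),
the even-connection graph G' of the edge {xₙ, yₘ} again satisfies condition (2). -/
theorem stmt4 (h : ℕ) (G : SimpleGraph (Vtx h))
    (hY : MaxIndepSet G (Yset h)) (hX : MinVertexCover G (Xset h))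
    (hpair : ∀ i : Fin h, G.Adj (xv i) (yv i))
    (h1 : Cond1 G) (h2 : Cond2 G)
    (n m : Fin h) (he : G.Adj (xv n) (yv m))
    (hsq : ∀ u : Vtx h, ¬ (G.Adj u (xv n) ∧ G.Adj u (yv m)))
    (G' : SimpleGraph (Vtx h)) (hG' : G' = ecGraph G (xv n) (yv m)) :
    Cond2 G' :=
  stmt4_general h G hY hpair h1 h2 n m hsq G' hG'
end

section
/- Let G be a finite simple graph on vertex set {x_1,...,x_h, y_1,...,y_h} with Y = {y_1,...,y_h} a maximal independent set, X = {x_1,...,x_h} a minimal vertex cover, {x_i,y_i} ∈ E(G) for all i, and satisfying conditions: (1) for distinct i,j,k and z_i ∈ {x_i,y_i}, if {z_i,x_j} ∈ E(G) and {y_j,x_k} ∈ E(G) then {z_i,x_k} ∈ E(G); (2) if {x_i,y_j} ∈ E(G) then {x_i,x_j} ∉ E(G). Let e = {x_n, y_m} ∈ E(G) and let G' be the graph on V(G) whose edges are E(G) together with all pairs {u,v} of distinct vertices with ({u,x_n}, {y_m,v} ∈ E(G)) or ({u,y_m}, {x_n,v} ∈ E(G)). Then G' satisfies condition (1): for distinct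 i,j,k and z_i ∈ {x_i,y_i}, if {z_i,x_j} ∈ E(G') and {y_j,x_k} ∈ E(G') then {z_i,x_k} ∈ E(G'). -/
open SimpleGraph

variable {h : ℕ}

/-!
Without its distinctness hypotheses, condition (1) still holds in `G`: the degenerate cases
are settled by `{xᵢ, yᵢ} ∈ E(G)` and condition (2). This stronger closure property lets every
case of condition (1) for `G'` be reduced to one application of it in `G`: a new edge
through `{xₙ, yₘ}` is extended by `yⱼ xₖ` on the side where it ends in an `x`-vertex, and the
edge `yⱼ yₘ` that would be needed otherwise does not exist because `Y` is independent.
-/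

def XTransitive (G : SimpleGraph (Vtx h)) : Prop :=
  ∀ i j k : Fin h, ∀ z ∈ ({xv i, yv i} : Set (Vtx h)),
    G.Adj z (xv j) → G.Adj (yv j) (xv k) → G.Adj z (xv k)

theorem Cond1.xTransitive {G : SimpleGraph (Vtx h)} (h1 : Cond1 G) (h2 : Cond2 G)
    (hpair : ∀ i : Fin h, G.Adj (xv i) (yv i)) : XTransitive G := by
  intro i j k z hz hzj hjk
  by_cases hjk' : j = k
  · exact hjk' ▸ hzj
  by_cases hij : i = j
  · subst hij
    rcases hz with rfl | rfl
    · exact absurd hzj G.irrefl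
    · exact hjk
  by_cases hik : i = k
  · subst hik
    rcases hz with rfl | rfl
    · exact absurd hzj (h2 i j hjk.symm)
    · exact (hpair i).symm
  exact h1 i j k hij hjk' hik z hz hzj hjk

theorem XTransitive.cond1_ecGraph {G : SimpleGraph (Vtx h)} (hT : XTransitive G)
    (hY : IndepSet G (Yset h)) (n m : Fin h) :
    Cond1 (ecGraph G (xv n) (yv m)) := by
  intro i j k _ _ hik z hz ⟨_, hzj⟩ ⟨_, hjk⟩
  have hzk : z ≠ xv k := by
    rcases hz with rfl | rfl
    · simpa [xv] using hik
    · simp [xv, yv]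
  refine ⟨hzk, ?_⟩
  rcases hjk with hjk | ⟨hjn, hmk⟩ | ⟨hjm, -⟩
  · rcases hzj with hzj | ⟨hzn, hmj⟩ | ⟨hzm, hnj⟩
    · exact Or.inl (hT i j k z hz hzj hjk)
    · exact Or.inr (Or.inl ⟨hzn, hT m j k _ (Or.inr rfl) hmj hjk⟩)
    · exact Or.inr (Or.inr ⟨hzm, hT n j k _ (Or.inl rfl) hnj hjk⟩)
  · rcases hzj with hzj | ⟨hzn, -⟩ | ⟨-, hnj⟩
    · exact Or.inr (Or.inl ⟨hT i j n z hz hzj hjn, hmk⟩)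
    · exact Or.inr (Or.inl ⟨hzn, hmk⟩)
    · exact absurd (hT n j n _ (Or.inl rfl) hnj hjn) G.irrefl
  · exact absurd hjm (hY _ ⟨j, rfl⟩ _ ⟨m, rfl⟩)

theorem stmt5_general (h : ℕ) (G : SimpleGraph (Vtx h))
    (hY : MaxIndepSet G (Yset h))
    (hpair : ∀ i : Fin h, G.Adj (xv i) (yv i))
    (h1 : Cond1 G) (h2 : Cond2 G)
    (n m : Fin h)
    (G' : SimpleGraph (Vtx h)) (hG' : G' = ecGraph G (xv n) (yv m)) :
    Cond1 G' := by
  subst hG'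
  exact (h1.xTransitive h2 hpair).cond1_ecGraph hY.1 n m

/-- the even-connection graph G' of an edge {xₙ, yₘ} again
satisfies condition (1). -/
theorem stmt5 (h : ℕ) (G : SimpleGraph (Vtx h))
    (hY : MaxIndepSet G (Yset h)) (hX : MinVertexCover G (Xset h))
    (hpair : ∀ i : Fin h, G.Adj (xv i) (yv i))
    (h1 : Cond1 G) (h2 : Cond2 G)
    (n m : Fin h) (he : G.Adj (xv n) (yv m))
    (G' : SimpleGraph (Vtx h)) (hG' : G' = ecGraph G (xv n) (yv m)) :
    Cond1 G' :=
  stmt5_general h G hY hpair h1 h2 n m G' hG'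
end

section
/- Let G_1 and G_2 be finite simple graphs on disjoint vertex sets, each containing at least one edge, and let G_1 * G_2 be their join (all edges of G_1, all edges of G_2, and all edges between V(G_1) and V(G_2)). Then the induced matching number satisfies ν(G_1 * G_2) = max{ν(G_1), ν(G_2)}. -/
open SimpleGraph

/-- `M` is an induced matching of `G`: a set of edges of `G`, pairwise disjoint,
such that no edge of `G` joins two distinct edges of `M`. -/
def IsIndMatching {W : Type*} (G : SimpleGraph W) (M : Finset (Sym2 W)) : Prop :=
  (∀ e ∈ M, e ∈ G.edgeSet) ∧
  ∀ e ∈ M, ∀ f ∈ M, e ≠ f → ∀ a ∈ e, ∀ b ∈ f, a ≠ b ∧ ¬ G.Adj a b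

/-- The induced matching number ν(G). -/
noncomputable def indMatchNum {W : Type*} (G : SimpleGraph W) : ℕ :=
  sSup {n | ∃ M : Finset (Sym2 W), IsIndMatching G M ∧ M.card = n}

/-- The join of two graphs on disjoint vertex sets. -/
def joinG {V₁ V₂ : Type*} (G₁ : SimpleGraph V₁) (G₂ : SimpleGraph V₂) :
    SimpleGraph (V₁ ⊕ V₂) where
  Adj a b := match a, b with
    | .inl u, .inl v => G₁.Adj u v
    | .inr u, .inr v => G₂.Adj u v
    | _, _ => True
  symm := ⟨by rintro (u|u) (v|v) hv <;> simp_all <;> exact hv.symm⟩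
  loopless := ⟨by rintro (u|u) hu <;> simp_all⟩

/-!
`G₁` and `G₂` are induced subgraphs of the join, so `ν` of the join is at least the maximum.
Conversely, two vertices on different sides of the join are adjacent, so all vertices of an
induced matching with at least two edges lie on one side, and the matching comes from `G₁` or
from `G₂`. A matching with at most one edge is dominated by `ν(G₁) ≥ 1`.
-/

lemma Sym2.mem_range_map_of_forall_mem_range {α β : Type*} {f : α → β} {e : Sym2 β}
    (he : ∀ a ∈ e, a ∈ Set.range f) : e ∈ Set.range (Sym2.map f) := by
  induction e using Sym2.ind with
  | _ a b =>
    obtain ⟨x, rfl⟩ := he a (Sym2.mem_mk_left a b)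
    obtain ⟨y, rfl⟩ := he _ (Sym2.mem_mk_right _ b)
    exact ⟨s(x, y), Sym2.map_mk f x y⟩

section IndMatching

variable {V W : Type*} {G : SimpleGraph V} {H : SimpleGraph W}

lemma isIndMatching_empty : IsIndMatching G ∅ := by
  simp [IsIndMatching]

lemma isIndMatching_singleton {u v : V} (h : G.Adj u v) : IsIndMatching G {s(u, v)} := by
  refine ⟨by simpa using h, ?_⟩
  simp only [Finset.mem_singleton]
  rintro e rfl f rfl hef
  exact (hef rfl).elim

lemma IsIndMatching.map (f : G ↪g H) {M : Finset (Sym2 V)} (hM : IsIndMatching G M) :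
    IsIndMatching H (M.map f.toEmbedding.sym2Map) := by
  refine ⟨?_, ?_⟩
  · simp only [Finset.forall_mem_map]
    exact fun e he => f.map_mem_edgeSet_iff.2 (hM.1 e he)
  · simp only [Finset.forall_mem_map, Function.Embedding.sym2Map_apply]
    intro e he e' he' hne a ha b hb
    obtain ⟨a, ha₀, rfl⟩ := Sym2.mem_map.1 ha
    obtain ⟨b, hb₀, rfl⟩ := Sym2.mem_map.1 hb
    have := hM.2 e he e' he' (fun h => hne (h ▸ rfl)) a ha₀ b hb₀
    exact ⟨f.injective.ne this.1, f.map_adj_iff.not.2 this.2⟩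

lemma IsIndMatching.comap (f : G ↪g H) {M : Finset (Sym2 W)} (hM : IsIndMatching H M) :
    IsIndMatching G (M.preimage (Sym2.map f) (Sym2.map.injective f.injective).injOn) := by
  refine ⟨fun e he => f.map_mem_edgeSet_iff.1 (hM.1 _ (Finset.mem_preimage.1 he)), ?_⟩
  intro e he e' he' hne a ha b hb
  have := hM.2 _ (Finset.mem_preimage.1 he) _ (Finset.mem_preimage.1 he')
    ((Sym2.map.injective f.injective).ne hne) (f a) (Sym2.mem_map.2 ⟨a, ha, rfl⟩)
    (f b) (Sym2.mem_map.2 ⟨b, hb, rfl⟩)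
  exact ⟨fun h => this.1 (congrArg f h), f.map_adj_iff.not.1 this.2⟩

lemma bddAbove_card_isIndMatching [Finite V] (G : SimpleGraph V) :
    BddAbove {n | ∃ M : Finset (Sym2 V), IsIndMatching G M ∧ M.card = n} := by
  have := Fintype.ofFinite V
  refine ⟨Fintype.card (Sym2 V), ?_⟩
  rintro n ⟨M, -, rfl⟩
  exact Finset.card_le_univ M

lemma nonempty_card_isIndMatching (G : SimpleGraph V) :
    {n | ∃ M : Finset (Sym2 V), IsIndMatching G M ∧ M.card = n}.Nonempty :=
  ⟨0, ∅, isIndMatching_empty, rfl⟩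

lemma IsIndMatching.card_le_indMatchNum [Finite V] {M : Finset (Sym2 V)}
    (hM : IsIndMatching G M) : M.card ≤ indMatchNum G :=
  le_csSup (bddAbove_card_isIndMatching G) ⟨M, hM, rfl⟩

lemma exists_isIndMatching_card_eq_indMatchNum [Finite V] (G : SimpleGraph V) :
    ∃ M : Finset (Sym2 V), IsIndMatching G M ∧ M.card = indMatchNum G :=
  Nat.sSup_mem (nonempty_card_isIndMatching G) (bddAbove_card_isIndMatching G)

lemma one_le_indMatchNum [Finite V] {u v : V} (h : G.Adj u v) : 1 ≤ indMatchNum G :=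
  (isIndMatching_singleton h).card_le_indMatchNum

lemma indMatchNum_le_of_embedding [Finite W] (f : G ↪g H) : indMatchNum G ≤ indMatchNum H := by
  refine csSup_le_csSup (bddAbove_card_isIndMatching H)
    (nonempty_card_isIndMatching G) ?_
  rintro n ⟨M, hM, rfl⟩
  exact Set.mem_ofPred.2 ⟨M.map f.toEmbedding.sym2Map, hM.map f, Finset.card_map _⟩

lemma IsIndMatching.card_le_indMatchNum_of_forall_mem_range [Finite V] (f : G ↪g H)
    {M : Finset (Sym2 W)} (hM : IsIndMatching H M)
    (hM_range : ∀ e ∈ M, ∀ a ∈ e, a ∈ Set.range f) : M.card ≤ indMatchNum G := by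
  classical
  calc M.card = (M.preimage (Sym2.map f) (Sym2.map.injective f.injective).injOn).card := by
        rw [Finset.card_preimage, Finset.filter_true_of_mem fun e he =>
          Sym2.mem_range_map_of_forall_mem_range (hM_range e he)]
    _ ≤ indMatchNum G := (hM.comap f).card_le_indMatchNum

end IndMatching

section Join

variable {V₁ V₂ : Type*} (G₁ : SimpleGraph V₁) (G₂ : SimpleGraph V₂)

def joinG.inl : G₁ ↪g joinG G₁ G₂ := ⟨Function.Embedding.inl, Iff.rfl⟩

def joinG.inr : G₂ ↪g joinG G₁ G₂ := ⟨Function.Embedding.inr, Iff.rfl⟩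

variable {G₁ G₂}

lemma joinG_adj_of_isLeft_ne {a b : V₁ ⊕ V₂} (h : a.isLeft ≠ b.isLeft) :
    (joinG G₁ G₂).Adj a b := by
  rcases a with a | a <;> rcases b with b | b <;> simp_all [joinG]

lemma IsIndMatching.isLeft_eq {M : Finset (Sym2 (V₁ ⊕ V₂))} (hM : IsIndMatching (joinG G₁ G₂) M)
    (hcard : 1 < M.card) {e f : Sym2 (V₁ ⊕ V₂)} (he : e ∈ M) (hf : f ∈ M) {a b : V₁ ⊕ V₂}
    (ha : a ∈ e) (hb : b ∈ f) : a.isLeft = b.isLeft := by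
  have of_ne : ∀ {e f}, e ∈ M → f ∈ M → e ≠ f → ∀ {a b : V₁ ⊕ V₂}, a ∈ e → b ∈ f →
      a.isLeft = b.isLeft := fun he hf hef _ _ ha hb =>
    by_contra fun h => (hM.2 _ he _ hf hef _ ha _ hb).2 (joinG_adj_of_isLeft_ne h)
  by_cases hef : e = f
  · subst hef
    -- compare both endpoints of `e` with a vertex of another edge
    obtain ⟨g, hg, hge⟩ := Finset.exists_mem_ne hcard e
    obtain ⟨c, hc⟩ : ∃ c, c ∈ g := ⟨_, Sym2.out_fst_mem g⟩
    exact (of_ne he hg hge.symm ha hc).trans (of_ne hf hg hge.symm hb hc).symm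
  · exact of_ne he hf hef ha hb

lemma IsIndMatching.forall_mem_range_inl_or_inr {M : Finset (Sym2 (V₁ ⊕ V₂))}
    (hM : IsIndMatching (joinG G₁ G₂) M) (hcard : 1 < M.card) :
    (∀ e ∈ M, ∀ a ∈ e, a ∈ Set.range Sum.inl) ∨ (∀ e ∈ M, ∀ a ∈ e, a ∈ Set.range Sum.inr) := by
  obtain ⟨e, he⟩ := Finset.card_pos.1 (zero_lt_one.trans hcard)
  obtain ⟨c, hc⟩ : ∃ c, c ∈ e := ⟨_, Sym2.out_fst_mem e⟩
  have side : ∀ f ∈ M, ∀ b ∈ f, b.isLeft = c.isLeft := fun f hf b hb =>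
    hM.isLeft_eq hcard hf he hb hc
  rw [Set.range_inl, Set.range_inr]
  cases h : c.isLeft
  · exact .inr fun f hf b hb => Sum.not_isLeft.1 (by rw [side f hf b hb, h]; decide)
  · exact .inl fun f hf b hb => (side f hf b hb).trans h

end Join

theorem stmt9_general {V₁ V₂ : Type*} [Fintype V₁] [Fintype V₂]
    (G₁ : SimpleGraph V₁) (G₂ : SimpleGraph V₂)
    (h₁ : ∃ u v, G₁.Adj u v) :
    indMatchNum (joinG G₁ G₂) = max (indMatchNum G₁) (indMatchNum G₂) := by
  refine le_antisymm ?_ (max_le (indMatchNum_le_of_embedding (joinG.inl G₁ G₂))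
    (indMatchNum_le_of_embedding (joinG.inr G₁ G₂)))
  obtain ⟨M, hM, hcard⟩ := exists_isIndMatching_card_eq_indMatchNum (joinG G₁ G₂)
  rw [← hcard]
  rcases le_or_gt M.card 1 with hle | hgt
  · obtain ⟨u, v, huv⟩ := h₁
    exact hle.trans ((one_le_indMatchNum huv).trans (le_max_left _ _))
  rcases hM.forall_mem_range_inl_or_inr hgt with hleft | hright
  · exact (hM.card_le_indMatchNum_of_forall_mem_range (joinG.inl G₁ G₂) hleft).trans
      (le_max_left _ _)
  · exact (hM.card_le_indMatchNum_of_forall_mem_range (joinG.inr G₁ G₂) hright).trans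
      (le_max_right _ _)

/-- for graphs each containing an edge,
ν(G₁ * G₂) = max{ν(G₁), ν(G₂)}. -/
theorem stmt9 {V₁ V₂ : Type*} [Fintype V₁] [Fintype V₂]
    (G₁ : SimpleGraph V₁) (G₂ : SimpleGraph V₂)
    (h₁ : ∃ u v, G₁.Adj u v) (h₂ : ∃ u v, G₂.Adj u v) :
    indMatchNum (joinG G₁ G₂) = max (indMatchNum G₁) (indMatchNum G₂) :=
  stmt9_general G₁ G₂ h₁
end

section
/- Let G be a finite simple graph on vertex set {x_1,...,x_h, y_1,...,y_h} without isolated vertices, such that Y = {y_1,...,y_h} is an independent set, {x_i,y_i} ∈ E(G) for all i, and G satisfies: (1) for distinct i,j,k and z_i ∈ {x_i,y_i}, if {z_i,x_j} ∈ E(G) and {y_j,x_k} ∈ E(G) then {z_i,x_k} ∈ E(G); (2) if {x_i,y_j} ∈ E(G) then {x_i,x_j} ∉ E(G). Then every maximal independent set of G has cardinality exactly h; that is, G is unmixed (well-covered). -/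
/-! A maximal independent set `S` contains at most one vertex of each edge `{xᵢ, yᵢ}`, and it
contains at least one. Indeed, if `xᵢ, yᵢ ∉ S`, maximality gives a neighbour of `yᵢ` in `S`, which
is some `xⱼ` since the `y`'s are independent, and a neighbour `t ∈ {xₖ, yₖ}` of `xᵢ` in `S`.
Condition (2) and independence of `S` force `k ≠ j`, and then condition (1), applied to
`t ~ xᵢ` and `yᵢ ~ xⱼ`, makes `t ~ xⱼ`, an edge inside `S`. Hence `S` picks exactly one vertex
from each of the `h` pairs. -/

open SimpleGraph

variable {h : ℕ}

theorem MaxIndepSet.exists_adj_of_notMem {W : Type*} {G : SimpleGraph W} {S : Set W}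
    (hS : MaxIndepSet G S) {v : W} (hv : v ∉ S) : ∃ s ∈ S, G.Adj v s := by
  by_contra! hc
  have hins : IndepSet G (insert v S) := by
    rintro u (rfl | hu) w (rfl | hw)
    · exact G.loopless.irrefl _
    · exact hc w hw
    · exact fun hadj => hc u hu hadj.symm
    · exact hS.1 u hu w hw
  exact hv ((hS.2 _ hins (Set.subset_insert v S)) ▸ Set.mem_insert v S)

theorem Set.ncard_eq_natCard_of_one_mem_per_pair {α : Type*} {S : Set (α ⊕ α)}
    (hle : ∀ a, ¬(Sum.inl a ∈ S ∧ Sum.inr a ∈ S)) (hge : ∀ a, Sum.inl a ∈ S ∨ Sum.inr a ∈ S) :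
    S.ncard = Nat.card α := by
  have hinj : Set.InjOn (Sum.elim id id) S := by
    rintro (a | a) ha (b | b) hb (rfl : a = b)
    · rfl
    · exact absurd ⟨ha, hb⟩ (hle a)
    · exact absurd ⟨hb, ha⟩ (hle a)
    · rfl
  have himage : Sum.elim id id '' S = Set.univ := by
    refine Set.eq_univ_of_forall fun a => ?_
    rcases hge a with ha | ha
    · exact ⟨_, ha, rfl⟩
    · exact ⟨_, ha, rfl⟩
  rw [← hinj.ncard_image, himage, Set.ncard_univ]

theorem mem_or_mem_of_maxIndepSet {G : SimpleGraph (Vtx h)} {S : Set (Vtx h)}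
    (hYind : IndepSet G (Yset h))
    (hpair : ∀ i : Fin h, G.Adj (xv i) (yv i)) (h1 : Cond1 G) (h2 : Cond2 G)
    (hS : MaxIndepSet G S) (i : Fin h) : xv i ∈ S ∨ yv i ∈ S := by
  by_contra! ⟨hx, hy⟩
  obtain ⟨s, hsS, hys⟩ := hS.exists_adj_of_notMem hy
  obtain ⟨j, rfl⟩ : ∃ j, s = xv j := by
    rcases s with j | j
    · exact ⟨j, rfl⟩
    · exact absurd hys (hYind _ ⟨i, rfl⟩ _ ⟨j, rfl⟩)
  have hij : i ≠ j := by rintro rfl; exact hx hsS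
  obtain ⟨t, htS, hxt⟩ := hS.exists_adj_of_notMem hx
  obtain ⟨k, htk⟩ : ∃ k, t ∈ ({xv k, yv k} : Set (Vtx h)) := by
    rcases t with k | k
    · exact ⟨k, Or.inl rfl⟩
    · exact ⟨k, Or.inr rfl⟩
  have hik : i ≠ k := by rintro rfl; rcases htk with rfl | rfl <;> contradiction
  have hkj : k ≠ j := by
    rintro rfl
    rcases htk with rfl | rfl
    · exact h2 k i hys.symm hxt.symm
    · exact hS.1 _ hsS _ htS (hpair k)
  exact hS.1 _ htS _ hsS (h1 k i j hik.symm hij hkj t htk hxt.symm hys)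

theorem stmt10_general (h : ℕ) (G : SimpleGraph (Vtx h))
    (hYind : IndepSet G (Yset h))
    (hpair : ∀ i : Fin h, G.Adj (xv i) (yv i))
    (h1 : Cond1 G) (h2 : Cond2 G) :
    ∀ S : Set (Vtx h), MaxIndepSet G S → S.ncard = h := by
  intro S hS
  simpa using Set.ncard_eq_natCard_of_one_mem_per_pair
    (fun i ⟨hx, hy⟩ => hS.1 (xv i) hx (yv i) hy (hpair i))
    (mem_or_mem_of_maxIndepSet hYind hpair h1 h2 hS)

/-- a labeled graph satisfying conditions (1) and (2) is
well-covered: every maximal independent set has cardinality h. -/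
theorem stmt10 (h : ℕ) (G : SimpleGraph (Vtx h))
    (hiso : ∀ v : Vtx h, ∃ w, G.Adj v w)
    (hYind : IndepSet G (Yset h))
    (hpair : ∀ i : Fin h, G.Adj (xv i) (yv i))
    (h1 : Cond1 G) (h2 : Cond2 G) :
    ∀ S : Set (Vtx h), MaxIndepSet G S → S.ncard = h :=
  stmt10_general h G hYind hpair h1 h2
end

section
/- Let G be a finite simple graph on vertex set {x_1,...,x_h, y_1,...,y_h} with Y = {y_1,...,y_h} a maximal independent set, X = {x_1,...,x_h} a minimal vertex cover, {x_i,y_i} ∈ E(G) for all i, satisfying conditions (1) and (2) below. Let e ∈ E(G) and let G' be the graph on V(G) whose edges are E(G) together with all pairs {u,v} of distinct vertices even-connected with respect to e (i.e., there is a path u,a,b,v in G with {a,b} = e). Let t be a vertex, j,k indices, and t_i ∈ {x_i, y_i}. If {t_i, x_j} ∈ E(G') and {y_j, x_k} ∈ E(G') with i,j,k distinct, then {t_i, x_k} ∈ E(G') or {t_i, y_j} ∈ E(G'). -/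
open SimpleGraph

variable {h : ℕ}

/-! Since `Y` is independent, the neighbours of `yⱼ` are `x`-vertices, so condition (1), with
condition (2) and the edges `{xᵢ, yᵢ}` covering coinciding indices, says that every neighbour of
`xⱼ` is adjacent to every neighbour of `yⱼ`. This closure property passes from `G` to the
even-connection graph `G'` of any edge, giving `{t, xₖ} ∈ E(G')` unless `t = xₖ`; and then
`{t, yⱼ} ∈ E(G')` is the second hypothesis. -/

lemma ecGraph_adj_of_forall_adj {W : Type*} {G : SimpleGraph W} {a b p q : W}
    (hpq : ∀ w v, G.Adj w p → G.Adj q v → G.Adj w v) {w v : W} (hwv : w ≠ v)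
    (hw : (ecGraph G a b).Adj w p) (hv : (ecGraph G a b).Adj q v) :
    (ecGraph G a b).Adj w v := by
  refine ⟨hwv, ?_⟩
  have hloop : ∀ c, G.Adj c p → G.Adj q c → False := fun c hcp hqc =>
    G.loopless.irrefl c (hpq c c hcp hqc)
  obtain ⟨-, hwp | ⟨hwa, hbp⟩ | ⟨hwb, hap⟩⟩ := hw <;>
    obtain ⟨-, hqv | ⟨hqa, hbv⟩ | ⟨hqb, hav⟩⟩ := hv
  · exact Or.inl (hpq w v hwp hqv)
  · exact Or.inr (Or.inl ⟨hpq w a hwp hqa, hbv⟩)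
  · exact Or.inr (Or.inr ⟨hpq w b hwp hqb, hav⟩)
  · exact Or.inr (Or.inl ⟨hwa, hpq b v hbp hqv⟩)
  · exact Or.inr (Or.inl ⟨hwa, hbv⟩)
  · exact (hloop b hbp hqb).elim
  · exact Or.inr (Or.inr ⟨hwb, hpq a v hap hqv⟩)
  · exact (hloop a hap hqa).elim
  · exact Or.inr (Or.inr ⟨hwb, hav⟩)

lemma exists_eq_xv_of_adj_yv {G : SimpleGraph (Vtx h)} (hY : IndepSet G (Yset h)) {j : Fin h}
    {v : Vtx h} (hv : G.Adj (yv j) v) : ∃ m, v = xv m := by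
  obtain m | m := v
  · exact ⟨m, rfl⟩
  · exact absurd hv (hY _ ⟨j, rfl⟩ _ ⟨m, rfl⟩)

lemma adj_xv_of_adj_xv_of_adj_yv_xv {G : SimpleGraph (Vtx h)}
    (hpair : ∀ i : Fin h, G.Adj (xv i) (yv i)) (h1 : Cond1 G) (h2 : Cond2 G)
    {j k : Fin h} {w : Vtx h} (hwj : G.Adj w (xv j)) (hjk : G.Adj (yv j) (xv k)) :
    G.Adj w (xv k) := by
  rcases eq_or_ne j k with rfl | hjk'
  · exact hwj
  obtain n | n := w
  · rcases eq_or_ne n j with rfl | hnj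
    · exact absurd hwj (G.loopless.irrefl _)
    rcases eq_or_ne n k with rfl | hnk
    · exact absurd hwj (h2 _ j hjk.symm)
    · exact h1 n j k hnj hjk' hnk (xv n) (Or.inl rfl) hwj hjk
  · rcases eq_or_ne n j with rfl | hnj
    · exact hjk
    rcases eq_or_ne n k with rfl | hnk
    · exact (hpair _).symm
    · exact h1 n j k hnj hjk' hnk (yv n) (Or.inr rfl) hwj hjk

lemma adj_of_adj_xv_of_adj_yv {G : SimpleGraph (Vtx h)} (hY : IndepSet G (Yset h))
    (hpair : ∀ i : Fin h, G.Adj (xv i) (yv i)) (h1 : Cond1 G) (h2 : Cond2 G)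
    {j : Fin h} {w v : Vtx h} (hwj : G.Adj w (xv j)) (hjv : G.Adj (yv j) v) : G.Adj w v := by
  obtain ⟨m, rfl⟩ := exists_eq_xv_of_adj_yv hY hjv
  exact adj_xv_of_adj_xv_of_adj_yv_xv hpair h1 h2 hwj hjv

theorem stmt11_general (h : ℕ) (G : SimpleGraph (Vtx h))
    (hY : MaxIndepSet G (Yset h))
    (hpair : ∀ i : Fin h, G.Adj (xv i) (yv i))
    (h1 : Cond1 G) (h2 : Cond2 G)
    (a b : Vtx h)
    (G' : SimpleGraph (Vtx h)) (hG' : G' = ecGraph G a b)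
    (i j k : Fin h)
    (t : Vtx h)
    (h₁ : G'.Adj t (xv j)) (h₂ : G'.Adj (yv j) (xv k)) :
    G'.Adj t (xv k) ∨ G'.Adj t (yv j) := by
  subst hG'
  rcases eq_or_ne t (xv k) with rfl | htk
  · exact Or.inr h₂.symm
  · exact Or.inl (ecGraph_adj_of_forall_adj
      (fun _ _ => adj_of_adj_xv_of_adj_yv hY.1 hpair h1 h2) htk h₁ h₂)

/-- single-edge case of Lemma 3.6: in the even-connection graph
G' of an edge e, if {tᵢ,xⱼ}, {yⱼ,xₖ} ∈ E(G') with i,j,k distinct, then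
{tᵢ,xₖ} ∈ E(G') or {tᵢ,yⱼ} ∈ E(G'). -/
theorem stmt11 (h : ℕ) (G : SimpleGraph (Vtx h))
    (hY : MaxIndepSet G (Yset h)) (hX : MinVertexCover G (Xset h))
    (hpair : ∀ i : Fin h, G.Adj (xv i) (yv i))
    (h1 : Cond1 G) (h2 : Cond2 G)
    (a b : Vtx h) (he : G.Adj a b)
    (G' : SimpleGraph (Vtx h)) (hG' : G' = ecGraph G a b)
    (i j k : Fin h) (hij : i ≠ j) (hjk : j ≠ k) (hik : i ≠ k)
    (t : Vtx h) (ht : t ∈ ({xv i, yv i} : Set (Vtx h)))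
    (h₁ : G'.Adj t (xv j)) (h₂ : G'.Adj (yv j) (xv k)) :
    G'.Adj t (xv k) ∨ G'.Adj t (yv j) :=
  stmt11_general h G hY hpair h1 h2 a b G' hG' i j k t h₁ h₂
end

section
/- Let G be a finite simple graph, e = {a,b} ∈ E(G), and define G' on V(G) by adding to E(G) all pairs {u,v} of distinct vertices with ({u,a},{b,v} ∈ E(G)) or ({u,b},{a,v} ∈ E(G)). Let y be a vertex of G, let H = G \ N_G[y], and suppose a,b ∈ V(H); define H' on V(H) analogously from H and e. Then G' \ N_{G'}[y] is an induced subgraph of H'. -/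
open SimpleGraph

/-- The induced subgraph of `G` obtained by deleting the vertex set `S`
(modeled on the same vertex type). -/
def delG {W : Type*} (G : SimpleGraph W) (S : Set W) : SimpleGraph W where
  Adj u v := u ∉ S ∧ v ∉ S ∧ G.Adj u v
  symm := by constructor; intro u v hv; exact ⟨hv.2.1, hv.1, hv.2.2.symm⟩
  loopless := by constructor; intro u hu; exact G.ne_of_adj hu.2.2 rfl

/-!
Since `G ≤ G'`, a vertex outside `N_{G'}[y]` is also outside `N_G[y]`. Between such vertices,
with `a` and `b` also outside `N_G[y]`, every edge of `G` and every path `u, a, b, v` of `G`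
survives in `H`, so `G'` and `H'` have the same edges there.
-/

section EvenConnection

variable {W : Type*} {G G₂ : SimpleGraph W} {a b u v : W} {S : Set W}

theorem delG_adj : (delG G S).Adj u v ↔ u ∉ S ∧ v ∉ S ∧ G.Adj u v := Iff.rfl

theorem ecGraph_adj : (ecGraph G a b).Adj u v ↔
    u ≠ v ∧ (G.Adj u v ∨ (G.Adj u a ∧ G.Adj b v) ∨ (G.Adj u b ∧ G.Adj a v)) := Iff.rfl

theorem le_ecGraph : G ≤ ecGraph G a b :=
  fun _ _ h => ⟨h.ne, Or.inl h⟩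

theorem closedNbhd_mono (h : G ≤ G₂) (y : W) :
    {v | v = y ∨ G.Adj y v} ⊆ {v | v = y ∨ G₂.Adj y v} :=
  fun _ => Or.imp_right (@h _ _)

theorem ecGraph_delG_adj (ha : a ∉ S) (hb : b ∉ S) (hu : u ∉ S) (hv : v ∉ S) :
    (ecGraph (delG G S) a b).Adj u v ↔ (ecGraph G a b).Adj u v := by
  simp only [ecGraph_adj, delG_adj, ha, hb, hu, hv, not_false_eq_true, true_and]

end EvenConnection

theorem stmt12_general {W : Type*} (G : SimpleGraph W) (a b : W)
    (y : W) (NGy : Set W) (hNGy : NGy = {v | v = y ∨ G.Adj y v})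
    (H : SimpleGraph W) (hH : H = delG G NGy)
    (ha : a ∉ NGy) (hb : b ∉ NGy)
    (G' H' : SimpleGraph W)
    (hG' : G' = ecGraph G a b) (hH' : H' = ecGraph H a b)
    (NG'y : Set W) (hNG'y : NG'y = {v | v = y ∨ G'.Adj y v}) :
    ∀ u v : W, u ∉ NG'y → v ∉ NG'y → ((delG G' NG'y).Adj u v ↔ H'.Adj u v) := by
  subst hG' hH hH' hNG'y hNGy
  intro u v hu hv
  have hNbhd := closedNbhd_mono (le_ecGraph : G ≤ ecGraph G a b) y
  rw [delG_adj, ecGraph_delG_adj ha hb (fun h => hu (hNbhd h)) (fun h => hv (hNbhd h))]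
  exact ⟨fun h => h.2.2, fun h => ⟨hu, hv, h⟩⟩

/-- single-edge case of Lemma 4.5: with H = G \ N_G[y] and
a, b vertices of H, the graph G' \ N_{G'}[y] is an induced subgraph of H':
the two graphs have the same edges among the vertices outside N_{G'}[y]. -/
theorem stmt12 {W : Type*} (G : SimpleGraph W) (a b : W) (hab : G.Adj a b)
    (y : W) (NGy : Set W) (hNGy : NGy = {v | v = y ∨ G.Adj y v})
    (H : SimpleGraph W) (hH : H = delG G NGy)
    (ha : a ∉ NGy) (hb : b ∉ NGy)
    (G' H' : SimpleGraph W)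
    (hG' : G' = ecGraph G a b) (hH' : H' = ecGraph H a b)
    (NG'y : Set W) (hNG'y : NG'y = {v | v = y ∨ G'.Adj y v}) :
    ∀ u v : W, u ∉ NG'y → v ∉ NG'y → ((delG G' NG'y).Adj u v ↔ H'.Adj u v) :=
  stmt12_general G a b y NGy hNGy H hH ha hb G' H' hG' hH' NG'y hNG'y
end
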